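/- arXiv:2001.04080 — 7 statements merged into one kernel-verified Lean document; each statement's English description precedes it below -/
import Mathlib

section
/- Let A be a bounded linear operator on a complex Banach space X, z ∉ σ(A), and x, y ∈ X with (A - zI)x = y, x ≠ 0, y ≠ 0. Suppose 0 < ε < 1 and z ∉ σ_ε(A), where σ_ε(A) := σ(A) ∪ {w ∈ ℂ : ‖A - wI‖·‖(A - wI)⁻¹‖ ≥ 1/ε}. If δx, δy satisfy (A - zI)(x + δx) = y + δy, then ε·(‖δy‖/‖y‖) ≤ ‖δx‖/‖x‖ ≤ (1/ε)·(‖δy‖/‖y‖). -/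
theorem stmt1 {X : Type*} [NormedAddCommGroup X] [NormedSpace ℂ X] [CompleteSpace X]
    (A : X →L[ℂ] X) (z : ℂ) (hz : z ∉ spectrum ℂ A)
    (ε : ℝ) (hε0 : 0 < ε) (hε1 : ε < 1)
    (hzε : ¬ (z ∈ spectrum ℂ A ∨
      ‖A - z • (1 : X →L[ℂ] X)‖ * ‖Ring.inverse (A - z • (1 : X →L[ℂ] X))‖ ≥ ε⁻¹))
    (x y δx δy : X) (hx : x ≠ 0) (hy : y ≠ 0)
    (hxy : (A - z • 1) x = y)
    (hpert : (A - z • 1) (x + δx) = y + δy) :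
    ε * (‖δy‖ / ‖y‖) ≤ ‖δx‖ / ‖x‖ ∧ ‖δx‖ / ‖x‖ ≤ ε⁻¹ * (‖δy‖ / ‖y‖) := by
  set B : X →L[ℂ] X := A - z • 1 with hB
  have hu : IsUnit B := by
    have h1 : IsUnit (algebraMap ℂ (X →L[ℂ] X) z - A) := spectrum.notMem_iff.mp hz
    have h2 : B = -(algebraMap ℂ (X →L[ℂ] X) z - A) := by
      simp [hB, Algebra.algebraMap_eq_smul_one]
    rw [h2]
    exact h1.neg
  set C : X →L[ℂ] X := Ring.inverse B with hC
  have hCB : ∀ v : X, C (B v) = v := by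
    intro v
    have : (C * B) v = (1 : X →L[ℂ] X) v := by
      rw [hC, Ring.inverse_mul_cancel _ hu]
    simpa using this
  have hBδ : B δx = δy := by
    have : B x + B δx = y + δy := by rw [← map_add]; exact hpert
    rw [hxy] at this
    exact add_left_cancel this
  have hCx : C y = x := by rw [← hxy, hCB]
  have hCδ : C δy = δx := by rw [← hBδ, hCB]
  have ha : ‖δy‖ ≤ ‖B‖ * ‖δx‖ := hBδ ▸ B.le_opNorm δx
  have hb : ‖y‖ ≤ ‖B‖ * ‖x‖ := hxy ▸ B.le_opNorm x
  have hc : ‖δx‖ ≤ ‖C‖ * ‖δy‖ := hCδ ▸ C.le_opNorm δy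
  have hd : ‖x‖ ≤ ‖C‖ * ‖y‖ := hCx ▸ C.le_opNorm y
  have hkey : ‖B‖ * ‖C‖ < ε⁻¹ := by
    by_contra h
    exact hzε (Or.inr (le_of_not_gt h))
  have hxpos : 0 < ‖x‖ := norm_pos_iff.mpr hx
  have hypos : 0 < ‖y‖ := norm_pos_iff.mpr hy
  have hBpos : 0 < ‖B‖ := by nlinarith [norm_nonneg B, norm_nonneg x]
  have hCpos : 0 < ‖C‖ := by nlinarith [norm_nonneg C, norm_nonneg y]
  have hεinv : ε * (‖B‖ * ‖C‖) < 1 := by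
    have := (lt_div_iff₀' hε0).mp (by rw [div_eq_inv_mul, mul_one] at *; simpa [one_div] using hkey)
    linarith
  have h1 : ε * ‖δy‖ * ‖x‖ ≤ ‖δx‖ * ‖y‖ := by
    have e1 : ‖δy‖ * ‖x‖ ≤ (‖B‖ * ‖δx‖) * (‖C‖ * ‖y‖) :=
      mul_le_mul ha hd (norm_nonneg x) (by positivity)
    have e2 : ε * (‖δy‖ * ‖x‖) ≤ ε * ((‖B‖ * ‖δx‖) * (‖C‖ * ‖y‖)) :=
      mul_le_mul_of_nonneg_left e1 hε0.le
    have e3 : ε * ((‖B‖ * ‖δx‖) * (‖C‖ * ‖y‖)) = (ε * (‖B‖ * ‖C‖)) * (‖δx‖ * ‖y‖) := by ring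
    have e4 : (ε * (‖B‖ * ‖C‖)) * (‖δx‖ * ‖y‖) ≤ 1 * (‖δx‖ * ‖y‖) :=
      mul_le_mul_of_nonneg_right hεinv.le (by positivity)
    nlinarith
  have h2 : ‖δx‖ * ‖y‖ ≤ ε⁻¹ * ‖δy‖ * ‖x‖ := by
    have e1 : ‖δx‖ * ‖y‖ ≤ (‖C‖ * ‖δy‖) * (‖B‖ * ‖x‖) :=
      mul_le_mul hc hb (norm_nonneg y) (by positivity)
    have e3 : (‖C‖ * ‖δy‖) * (‖B‖ * ‖x‖) = (‖B‖ * ‖C‖) * (‖δy‖ * ‖x‖) := by ring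
    have e4 : (‖B‖ * ‖C‖) * (‖δy‖ * ‖x‖) ≤ ε⁻¹ * (‖δy‖ * ‖x‖) :=
      mul_le_mul_of_nonneg_right hkey.le (by positivity)
    nlinarith
  constructor
  · rw [← mul_div_assoc, div_le_div_iff₀ hypos hxpos]
    linarith [h1]
  · rw [← mul_div_assoc, div_le_div_iff₀ hxpos hypos]
    linarith [h2]
end

section
/- Let A, ΔA ∈ BL(X), z ∉ σ(A), x, y, δx, δy ∈ X with (A - zI)x = y, (A - zI + ΔA)(x + δx) = y + δy, x ≠ 0, y ≠ 0, and ‖(A - zI)⁻¹ΔA‖ < 1. If 0 < ε < 1 and z ∉ σ_ε(A), then ‖δx‖/‖x‖ ≤ (1/(ε(1 - ‖(A - zI)⁻¹ΔA‖)))·(‖δy‖/‖y‖ + ‖ΔA‖/‖A - zI‖). -/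
lemma stmt8_arith (t b nx ny d k dx dy ε : ℝ) (ht : 0 < t) (hb : 0 ≤ b)
    (hnx : 0 < nx) (hny : 0 < ny) (hd : 0 ≤ d) (hk0 : 0 ≤ k) (hk1 : k < 1)
    (hdx : 0 ≤ dx) (hdy : 0 ≤ dy) (hε : 0 < ε)
    (h1 : dx * (1 - k) ≤ b * dy + b * d * nx)
    (h2 : ε * (t * b) ≤ 1) (h3 : ny ≤ t * nx) :
    dx / nx ≤ (1 / (ε * (1 - k))) * (dy / ny + d / t) := by
  have hk1' : (0:ℝ) < 1 - k := by linarith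
  have key : ε * t * ny * ((1 - k) * dx) ≤ dy * t * nx + d * ny * nx := by
    calc ε * t * ny * ((1 - k) * dx) ≤ ε * t * ny * (b * dy + b * d * nx) := by
          apply mul_le_mul_of_nonneg_left _ (by positivity)
          linarith [h1]
      _ = (ε * (t * b)) * (dy * ny) + (ε * (t * b)) * (d * nx * ny) := by ring
      _ ≤ 1 * (dy * ny) + 1 * (d * nx * ny) := by gcongr <;> positivity
      _ ≤ dy * t * nx + d * ny * nx := by
          have : dy * ny ≤ dy * (t * nx) := mul_le_mul_of_nonneg_left h3 hdy
          nlinarith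
  have hpos : (0:ℝ) < ε * (1 - k) * (ny * t) := by positivity
  have hRHS : (1 / (ε * (1 - k))) * (dy / ny + d / t) * nx
      = ((dy * t + d * ny) * nx) / (ε * (1 - k) * (ny * t)) := by
    field_simp
  rw [div_le_iff₀ hnx, hRHS, le_div_iff₀ hpos]
  nlinarith [key, mul_pos hnx hny]

theorem stmt8 {X : Type*} [NormedAddCommGroup X] [NormedSpace ℂ X] [CompleteSpace X]
    (A ΔA : X →L[ℂ] X) (z : ℂ)
    (hz : z ∉ spectrum ℂ A)
    (x y δx δy : X) (hx : x ≠ 0) (hy : y ≠ 0)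
    (hxy : (A - z • 1) x = y)
    (hpert : (A - z • 1 + ΔA) (x + δx) = y + δy)
    (hsmall : ‖Ring.inverse (A - z • (1 : X →L[ℂ] X)) * ΔA‖ < 1)
    (ε : ℝ) (hε0 : 0 < ε) (hε1 : ε < 1)
    (hzε : ¬ (z ∈ spectrum ℂ A ∨
      ‖A - z • (1 : X →L[ℂ] X)‖ *
        ‖Ring.inverse (A - z • (1 : X →L[ℂ] X))‖ ≥ ε⁻¹)) :
    ‖δx‖ / ‖x‖ ≤
      (1 / (ε * (1 - ‖Ring.inverse (A - z • (1 : X →L[ℂ] X)) * ΔA‖))) *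
        (‖δy‖ / ‖y‖ + ‖ΔA‖ / ‖A - z • (1 : X →L[ℂ] X)‖) := by
  push_neg at hzε
  obtain ⟨-, hcond⟩ := hzε
  set T := A - z • (1 : X →L[ℂ] X) with hT
  set B := Ring.inverse T with hB
  have hTunit : IsUnit T := by
    have h0 := spectrum.notMem_iff.mp hz
    have h2 : T = -((algebraMap ℂ (X →L[ℂ] X)) z - A) := by
      simp only [hT, Algebra.algebraMap_eq_smul_one, neg_sub]
    rw [h2]
    exact h0.neg
  have hBT : B * T = 1 := Ring.inverse_mul_cancel T hTunit
  have hBTapp : ∀ v : X, B (T v) = v := by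
    intro v
    have := congrArg (fun f : X →L[ℂ] X => f v) hBT
    simpa using this
  -- key vector equation
  have heq : δx = B δy - (B * ΔA) x - (B * ΔA) δx := by
    have h := congrArg (fun v : X => B v) hpert
    simp only [ContinuousLinearMap.add_apply, map_add, hBTapp] at h
    have h4 : B (ΔA x) = (B * ΔA) x := rfl
    have h5 : B (ΔA δx) = (B * ΔA) δx := rfl
    have hBy : B y = x := by rw [← hxy]; exact hBTapp x
    rw [h4, h5, hBy] at h
    rw [eq_sub_iff_add_eq, eq_sub_iff_add_eq]
    have h' : x + (δx + (B * ΔA) δx + (B * ΔA) x) = x + B δy := by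
      rw [← h]; abel
    exact add_left_cancel h'
  have hnx : (0:ℝ) < ‖x‖ := norm_pos_iff.mpr hx
  have hny : (0:ℝ) < ‖y‖ := norm_pos_iff.mpr hy
  have hT0 : (0:ℝ) < ‖T‖ := by
    rcases eq_or_lt_of_le (norm_nonneg T) with h | h
    · exfalso
      have hT00 : T = 0 := by rwa [eq_comm, norm_eq_zero] at h
      rw [hT00] at hxy
      simp at hxy
      exact hy hxy.symm
    · exact h
  have h1 : ‖δx‖ * (1 - ‖B * ΔA‖) ≤ ‖B‖ * ‖δy‖ + ‖B‖ * ‖ΔA‖ * ‖x‖ := by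
    have hd1 : ‖δx‖ ≤ ‖B δy‖ + ‖(B * ΔA) x‖ + ‖(B * ΔA) δx‖ := by
      calc ‖δx‖ = ‖B δy - (B * ΔA) x - (B * ΔA) δx‖ := congrArg norm heq
        _ ≤ ‖B δy - (B * ΔA) x‖ + ‖(B * ΔA) δx‖ := norm_sub_le _ _
        _ ≤ ‖B δy‖ + ‖(B * ΔA) x‖ + ‖(B * ΔA) δx‖ := by
            gcongr
            exact norm_sub_le _ _
    have e1 : ‖B δy‖ ≤ ‖B‖ * ‖δy‖ := B.le_opNorm δy
    have e2 : ‖(B * ΔA) x‖ ≤ ‖B‖ * ‖ΔA‖ * ‖x‖ := by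
      calc ‖(B * ΔA) x‖ = ‖B (ΔA x)‖ := rfl
        _ ≤ ‖B‖ * ‖ΔA x‖ := B.le_opNorm _
        _ ≤ ‖B‖ * (‖ΔA‖ * ‖x‖) := by gcongr; exact ΔA.le_opNorm x
        _ = ‖B‖ * ‖ΔA‖ * ‖x‖ := by ring
    have e3 : ‖(B * ΔA) δx‖ ≤ ‖B * ΔA‖ * ‖δx‖ := (B * ΔA).le_opNorm δx
    nlinarith
  have h2 : ε * (‖T‖ * ‖B‖) ≤ 1 := by
    have hlt := mul_lt_mul_of_pos_left hcond hε0
    rw [mul_inv_cancel₀ (ne_of_gt hε0)] at hlt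
    linarith
  have h3 : ‖y‖ ≤ ‖T‖ * ‖x‖ := by
    rw [← hxy]; exact T.le_opNorm x
  exact stmt8_arith ‖T‖ ‖B‖ ‖x‖ ‖y‖ ‖ΔA‖ ‖B * ΔA‖ ‖δx‖ ‖δy‖ ε hT0 (norm_nonneg _)
    hnx hny (norm_nonneg _) (norm_nonneg _) hsmall (norm_nonneg _) (norm_nonneg _) hε0 h1 h2 h3
end

section
/- Let A ∈ BL(X) with A not a scalar multiple of the identity (so M(A) := sup{‖A - λI‖ : λ ∈ σ(A)} > 0), and let ε > 0. Then Λ_ε(A) ⊆ σ_{2ε/M(A)}(A), i.e., every z with z ∈ σ(A) or ‖(A - zI)⁻¹‖ ≥ 1/ε satisfies z ∈ σ(A) or ‖A - zI‖·‖(A - zI)⁻¹‖ ≥ M(A)/(2ε). -/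
theorem stmt10 {X : Type*} [NormedAddCommGroup X] [NormedSpace ℂ X] [CompleteSpace X]
    (A : X →L[ℂ] X) (hA : ∀ c : ℂ, A ≠ c • 1)
    (M : ℝ) (hM : M = sSup {r : ℝ | ∃ lam ∈ spectrum ℂ A, r = ‖A - lam • (1 : X →L[ℂ] X)‖})
    (hMpos : 0 < M) (ε : ℝ) (hε : 0 < ε) :
    ∀ z : ℂ, (z ∈ spectrum ℂ A ∨ ‖Ring.inverse (A - z • (1 : X →L[ℂ] X))‖ ≥ ε⁻¹) →
      (z ∈ spectrum ℂ A ∨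
        ‖A - z • (1 : X →L[ℂ] X)‖ * ‖Ring.inverse (A - z • (1 : X →L[ℂ] X))‖ ≥
          M / (2 * ε)) := by
  -- X is nontrivial since A ≠ 0
  have hX : Nontrivial X := by
    by_contra h
    have : Subsingleton X := not_nontrivial_iff_subsingleton.mp h
    exact hA 0 (Subsingleton.elim _ _)
  intro z hz
  rcases hz with h | h
  · exact Or.inl h
  by_cases hs : z ∈ spectrum ℂ A
  · exact Or.inl hs
  right
  -- spectrum nonempty (else M = 0)
  have hSne : {r : ℝ | ∃ lam ∈ spectrum ℂ A, r = ‖A - lam • (1 : X →L[ℂ] X)‖}.Nonempty := by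
    by_contra hne
    rw [Set.not_nonempty_iff_eq_empty] at hne
    rw [hne, Real.sSup_empty] at hM
    exact absurd hM hMpos.ne'
  -- key: each element of S is ≤ 2 ‖A - z•1‖
  have key : ∀ r ∈ {r : ℝ | ∃ lam ∈ spectrum ℂ A, r = ‖A - lam • (1 : X →L[ℂ] X)‖},
      r ≤ 2 * ‖A - z • (1 : X →L[ℂ] X)‖ := by
    rintro r ⟨lam, hlam, rfl⟩
    have hmem : lam - z ∈ spectrum ℂ (A - z • (1 : X →L[ℂ] X)) := by
      have e : z • (1 : X →L[ℂ] X) = algebraMap ℂ (X →L[ℂ] X) z :=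
        (Algebra.algebraMap_eq_smul_one z).symm
      rw [e, ← spectrum.sub_singleton_eq]
      exact Set.sub_mem_sub hlam rfl
    have h1 : ‖lam - z‖ ≤ ‖A - z • (1 : X →L[ℂ] X)‖ := by
      have := spectrum.norm_le_norm_of_mem hmem
      simpa [Algebra.algebraMap_eq_smul_one] using this
    calc ‖A - lam • (1 : X →L[ℂ] X)‖
        = ‖(A - z • (1 : X →L[ℂ] X)) + (z - lam) • (1 : X →L[ℂ] X)‖ := by
          congr 1; rw [sub_smul]; abel
      _ ≤ ‖A - z • (1 : X →L[ℂ] X)‖ + ‖(z - lam) • (1 : X →L[ℂ] X)‖ := norm_add_le _ _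
      _ ≤ ‖A - z • (1 : X →L[ℂ] X)‖ + ‖A - z • (1 : X →L[ℂ] X)‖ := by
          gcongr
          have e2 : ‖(z - lam) • (1 : X →L[ℂ] X)‖ ≤ ‖z - lam‖ := by
            simpa using norm_smul_le (z - lam) (1 : X →L[ℂ] X)
          rw [← norm_neg, neg_sub] at h1
          exact e2.trans h1
      _ = 2 * ‖A - z • (1 : X →L[ℂ] X)‖ := by ring
  have hMle : M ≤ 2 * ‖A - z • (1 : X →L[ℂ] X)‖ := by
    rw [hM]; exact csSup_le hSne key
  have hnorm : M / 2 ≤ ‖A - z • (1 : X →L[ℂ] X)‖ := by linarith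
  have hnn : (0:ℝ) ≤ M / 2 := by linarith
  calc M / (2 * ε) = (M / 2) * ε⁻¹ := by field_simp
    _ ≤ ‖A - z • (1 : X →L[ℂ] X)‖ * ‖Ring.inverse (A - z • (1 : X →L[ℂ] X))‖ := by
        apply mul_le_mul hnorm h (by positivity) (norm_nonneg _)
end

section
/- Let A ∈ BL(X) be a bounded linear operator on a complex Banach space with A ≠ 0 and let ε > 0. Then σ_{ε/(ε+2‖A‖)}(A) ⊆ Λ_ε(A): if z ∈ σ(A) or ‖A - zI‖·‖(A - zI)⁻¹‖ ≥ (ε + 2‖A‖)/ε, then z ∈ σ(A) or ‖(A - zI)⁻¹‖ ≥ 1/ε. -/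
theorem stmt11 {X : Type*} [NormedAddCommGroup X] [NormedSpace ℂ X] [CompleteSpace X]
    (A : X →L[ℂ] X) (hA : A ≠ 0) (ε : ℝ) (hε : 0 < ε) :
    ∀ z : ℂ,
      (z ∈ spectrum ℂ A ∨
        ‖A - z • (1 : X →L[ℂ] X)‖ * ‖Ring.inverse (A - z • (1 : X →L[ℂ] X))‖ ≥
          (ε + 2 * ‖A‖) / ε) →
      (z ∈ spectrum ℂ A ∨ ‖Ring.inverse (A - z • (1 : X →L[ℂ] X))‖ ≥ ε⁻¹) := by
  intro z hz
  by_cases hσ : z ∈ spectrum ℂ A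
  · exact Or.inl hσ
  rcases hz with h | h
  · exact Or.inl h
  right
  haveI : Nontrivial X := by
    by_contra hX
    rw [not_nontrivial_iff_subsingleton] at hX
    exact hA (by ext x; exact Subsingleton.elim _ _)
  have hu : IsUnit (A - z • (1 : X →L[ℂ] X)) := by
    have h1 := spectrum.notMem_iff.mp hσ
    have heq : A - z • (1 : X →L[ℂ] X) = -(algebraMap ℂ (X →L[ℂ] X) z - A) := by
      rw [Algebra.algebraMap_eq_smul_one]; abel
    rw [heq]
    exact h1.neg
  obtain ⟨u, huB⟩ := hu
  have hinv : Ring.inverse (A - z • (1 : X →L[ℂ] X)) = (↑u⁻¹ : X →L[ℂ] X) := by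
    rw [← huB, Ring.inverse_unit]
  rw [hinv] at h ⊢
  set r := ‖(↑u⁻¹ : X →L[ℂ] X)‖ with hrdef
  set a := ‖A‖ with hadef
  set b := ‖A - z • (1 : X →L[ℂ] X)‖ with hbdef
  set m := ‖z‖ with hmdef
  have hr0 : 0 ≤ r := norm_nonneg _
  have hApos : (0:ℝ) < a := norm_pos_iff.mpr hA
  have hone : ‖(1 : X →L[ℂ] X)‖ = 1 := norm_one
  have hmul : (↑u⁻¹ : X →L[ℂ] X) * (A - z • (1 : X →L[ℂ] X)) = 1 := by
    rw [← huB]; exact u.inv_mul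
  have h' : ε + 2 * a ≤ b * r * ε := by
    rw [ge_iff_le, div_le_iff₀ hε] at h
    exact h
  have hbpos : (0:ℝ) < b := by
    rw [hbdef, norm_pos_iff]
    intro hB0
    rw [hB0, mul_zero] at hmul
    have := congrArg norm hmul
    rw [hone, norm_zero] at this
    exact one_ne_zero this.symm
  by_cases hcase : b ≤ ε + 2 * a
  · have h1 : 1 ≤ ε * r := by nlinarith
    rw [ge_iff_le, inv_le_iff_one_le_mul₀ hε]
    linarith
  · push_neg at hcase
    exfalso
    have hsm : ‖z • (1 : X →L[ℂ] X)‖ = m := by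
      have := norm_smul z (1 : X →L[ℂ] X)
      rw [hone, mul_one] at this
      exact this
    have hm : b ≤ a + m := by
      calc b ≤ a + ‖z • (1 : X →L[ℂ] X)‖ := norm_sub_le _ _
        _ = a + m := by rw [hsm]
    -- resolvent identity: z • u⁻¹ = u⁻¹ * A - 1
    have hkey : z • (↑u⁻¹ : X →L[ℂ] X) = (↑u⁻¹ : X →L[ℂ] X) * A - 1 := by
      rw [← hmul, mul_sub]
      rw [mul_smul_comm, mul_one]
      abel
    have hres : m * r ≤ r * a + 1 := by
      have h0 : ‖z • (↑u⁻¹ : X →L[ℂ] X)‖ = m * r := by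
        rw [hmdef, hrdef]; exact norm_smul z ((↑u⁻¹ : X →L[ℂ] X))
      calc m * r = ‖z • (↑u⁻¹ : X →L[ℂ] X)‖ := h0.symm
        _ = ‖(↑u⁻¹ : X →L[ℂ] X) * A - 1‖ := by rw [hkey]
        _ ≤ ‖(↑u⁻¹ : X →L[ℂ] X) * A‖ + ‖(1 : X →L[ℂ] X)‖ := norm_sub_le _ _
        _ ≤ r * a + 1 := by
            have := norm_mul_le (↑u⁻¹ : X →L[ℂ] X) A
            rw [hone]
            linarith
    -- derive 1 ≤ ε * r
    have h1 : b * r * ε ≤ (a + m) * r * ε :=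
      mul_le_mul_of_nonneg_right (mul_le_mul_of_nonneg_right hm hr0) hε.le
    have h2 : (a + m) * r * ε ≤ (2 * a * r + 1) * ε := by nlinarith
    have h3 : 1 ≤ ε * r := by nlinarith
    have hrpos : 0 < r := by nlinarith
    have h4 : ε < m - a := by linarith
    have h5 : ε * r < (m - a) * r := mul_lt_mul_of_pos_right h4 hrpos
    nlinarith
end

section
/- Let A ∈ BL(X) and 0 < ε < 1. If z ∈ σ_ε(A) (the ε-condition pseudospectrum), then |z| ≤ ((1+ε)/(1-ε))·‖A‖. -/
/-!
Outside the disc of radius `(1 + ε) / (1 - ε) * ‖A‖` the Neumann series gives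
`‖(A - z)⁻¹‖ ≤ (|z| - ‖A‖)⁻¹`, while `‖A - z‖ ≤ |z| + ‖A‖`, so the condition number of `A - z`
is below `ε⁻¹`; such a `z` is also outside the spectrum, since `|z| > ‖A‖`.
-/

open Ring

theorem Ring.inverse_smul {𝕜 A : Type*} [Field 𝕜] [Ring A] [Algebra 𝕜 A] {c : 𝕜} (hc : c ≠ 0)
    (x : A) : inverse (c • x) = c⁻¹ • inverse x := by
  by_cases hx : IsUnit x
  · obtain ⟨u, rfl⟩ := hx
    let v : Aˣ := ⟨c • u, c⁻¹ • ↑u⁻¹, by simp [hc], by simp [hc]⟩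
    rw [inverse_unit u]
    exact inverse_unit v
  · have hcx : ¬IsUnit (c • x) := by
      rwa [← Units.smul_mk0 hc, isUnit_smul_iff]
    rw [inverse_non_unit _ hx, inverse_non_unit _ hcx, smul_zero]

section NormedAlgebra

variable {𝕜 R : Type*} [NormedField 𝕜] [NormedRing R] [NormedAlgebra 𝕜 R] [NormOneClass R]

theorem norm_sub_smul_one_le (a : R) (z : 𝕜) : ‖a - z • 1‖ ≤ ‖z‖ + ‖a‖ :=
  calc ‖a - z • 1‖ ≤ ‖a‖ + ‖z • (1 : R)‖ := norm_sub_le _ _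
    _ = ‖z‖ + ‖a‖ := by rw [norm_smul, norm_one, mul_one, add_comm]

variable [HasSummableGeomSeries R]

omit [NormedAlgebra 𝕜 R] in
theorem norm_inverse_one_sub_le {t : R} (ht : ‖t‖ < 1) : ‖inverse (1 - t)‖ ≤ (1 - ‖t‖)⁻¹ := by
  have := tsum_geometric_le_of_norm_lt_one t ht
  rw [norm_one, sub_self, zero_add] at this
  rwa [NormedRing.inverse_one_sub t ht]

theorem norm_inverse_sub_smul_one_le {a : R} {z : 𝕜} (h : ‖a‖ < ‖z‖) :
    ‖inverse (a - z • 1)‖ ≤ (‖z‖ - ‖a‖)⁻¹ := by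
  have hz : z ≠ 0 := norm_pos_iff.mp ((norm_nonneg a).trans_lt h)
  have ht : ‖z⁻¹ • a‖ < 1 := by
    rwa [norm_smul, norm_inv, inv_mul_lt_iff₀ (norm_pos_iff.mpr hz), mul_one]
  have hfactor : a - z • 1 = (-z) • (1 - z⁻¹ • a) := by
    rw [smul_sub, smul_smul, neg_mul, mul_inv_cancel₀ hz, neg_one_smul, neg_smul]; abel
  calc ‖inverse (a - z • 1)‖ = ‖z‖⁻¹ * ‖inverse (1 - z⁻¹ • a)‖ := by
        rw [hfactor, inverse_smul (neg_ne_zero.mpr hz), norm_smul, norm_inv, norm_neg]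
    _ ≤ ‖z‖⁻¹ * (1 - ‖z⁻¹ • a‖)⁻¹ := by gcongr; exact norm_inverse_one_sub_le ht
    _ = (‖z‖ - ‖a‖)⁻¹ := by
        rw [norm_smul, norm_inv, ← mul_inv, mul_sub, mul_one,
          mul_inv_cancel_left₀ (norm_ne_zero_iff.mpr hz)]

end NormedAlgebra

theorem le_one_add_div_one_sub_mul {ε a : ℝ} (hε0 : 0 ≤ ε) (hε1 : ε < 1) (ha : 0 ≤ a) :
    a ≤ (1 + ε) / (1 - ε) * a :=
  le_mul_of_one_le_left ha ((one_le_div₀ (by linarith)).mpr (by linarith))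

theorem add_div_sub_lt_inv_of_one_add_div_one_sub_mul_lt {ε a r : ℝ} (hε0 : 0 < ε) (hε1 : ε < 1)
    (ha : 0 ≤ a) (h : (1 + ε) / (1 - ε) * a < r) : (r + a) / (r - a) < ε⁻¹ := by
  have har : 0 < r - a := sub_pos.mpr ((le_one_add_div_one_sub_mul hε0.le hε1 ha).trans_lt h)
  rw [div_mul_eq_mul_div, div_lt_iff₀ (by linarith)] at h
  rw [div_lt_iff₀ har, ← div_eq_inv_mul, lt_div_iff₀ hε0]
  linarith

theorem stmt12 {X : Type*} [NormedAddCommGroup X] [NormedSpace ℂ X] [CompleteSpace X]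
    [Nontrivial X] (A : X →L[ℂ] X) (ε : ℝ) (hε0 : 0 < ε) (hε1 : ε < 1) (z : ℂ)
    (hz : z ∈ spectrum ℂ A ∨
      ‖A - z • (1 : X →L[ℂ] X)‖ * ‖Ring.inverse (A - z • (1 : X →L[ℂ] X))‖ ≥ ε⁻¹) :
    ‖z‖ ≤ ((1 + ε) / (1 - ε)) * ‖A‖ := by
  by_contra! hlt
  have hA : ‖A‖ < ‖z‖ := (le_one_add_div_one_sub_mul hε0.le hε1 (norm_nonneg A)).trans_lt hlt
  rcases hz with hspec | hcond
  · exact hA.not_ge (spectrum.norm_le_norm_of_mem hspec)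
  · refine hcond.not_gt ?_
    calc ‖A - z • 1‖ * ‖inverse (A - z • 1)‖ ≤ (‖z‖ + ‖A‖) / (‖z‖ - ‖A‖) :=
          mul_le_mul (norm_sub_smul_one_le A z) (norm_inverse_sub_smul_one_le hA)
            (norm_nonneg _) (by positivity)
      _ < ε⁻¹ := add_div_sub_lt_inv_of_one_add_div_one_sub_mul_lt hε0 hε1 (norm_nonneg A) hlt
end

section
/- Let A ∈ BL(X), ε > 0, and suppose the condition pseudospectrum σ_{2ε/M(A)}(A) (with M(A) := sup{‖A - λI‖ : λ ∈ σ(A)} and 0 < 2ε/M(A) < 1) is disjoint from the open right half-plane {z : Re z > 0}. Then the pseudospectrum Λ_ε(A) is also disjoint from {z : Re z > 0}. -/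
theorem stmt17 {X : Type*} [NormedAddCommGroup X] [NormedSpace ℂ X] [CompleteSpace X]
    (A : X →L[ℂ] X) (hσ : (spectrum ℂ A).Nonempty)
    (M : ℝ) (hM : M = sSup {r : ℝ | ∃ lam ∈ spectrum ℂ A, r = ‖A - lam • (1 : X →L[ℂ] X)‖})
    (hMpos : 0 < M) (ε : ℝ) (hε : 0 < ε) (hε1 : 2 * ε / M < 1)
    (hdisj : ∀ z : ℂ,
      (z ∈ spectrum ℂ A ∨
        ‖A - z • (1 : X →L[ℂ] X)‖ * ‖Ring.inverse (A - z • (1 : X →L[ℂ] X))‖ ≥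
          (2 * ε / M)⁻¹) → ¬ 0 < z.re) :
    ∀ z : ℂ,
      (z ∈ spectrum ℂ A ∨ ‖Ring.inverse (A - z • (1 : X →L[ℂ] X))‖ ≥ ε⁻¹) →
        ¬ 0 < z.re := by
  intro z hz
  apply hdisj z
  rcases hz with h | h
  · exact Or.inl h
  · right
    have : Nontrivial X := by
      rcases subsingleton_or_nontrivial X with hs | hn
      · obtain ⟨k, hk⟩ := hσ
        exact absurd (isUnit_of_subsingleton _) hk
      · exact hn
    -- key: ‖A - z•1‖ ≥ M/2
    have hAz : M / 2 ≤ ‖A - z • (1 : X →L[ℂ] X)‖ := by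
      rw [div_le_iff₀ (by norm_num : (0:ℝ) < 2)]
      rw [hM]
      apply Real.sSup_le
      · rintro r ⟨lam, hlam, rfl⟩
        have hmem : lam - z ∈ spectrum ℂ (A - z • (1 : X →L[ℂ] X)) := by
          rw [← Algebra.algebraMap_eq_smul_one, ← spectrum.sub_singleton_eq]
          exact Set.sub_mem_sub hlam rfl
        have h1 : ‖lam - z‖ ≤ ‖A - z • (1 : X →L[ℂ] X)‖ :=
          spectrum.norm_le_norm_of_mem hmem
        calc ‖A - lam • (1 : X →L[ℂ] X)‖
            = ‖(A - z • (1 : X →L[ℂ] X)) - (lam - z) • (1 : X →L[ℂ] X)‖ := by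
              congr 1; rw [sub_smul]; abel
          _ ≤ ‖A - z • (1 : X →L[ℂ] X)‖ + ‖(lam - z) • (1 : X →L[ℂ] X)‖ :=
              norm_sub_le _ _
          _ = ‖A - z • (1 : X →L[ℂ] X)‖ + ‖lam - z‖ := by
              rw [norm_smul (lam - z) (1 : X →L[ℂ] X), norm_one, mul_one]
          _ ≤ ‖A - z • (1 : X →L[ℂ] X)‖ + ‖A - z • (1 : X →L[ℂ] X)‖ := by linarith
          _ = ‖A - z • (1 : X →L[ℂ] X)‖ * 2 := by ring
      · positivity
    have key : (2 * ε / M)⁻¹ = (M / 2) * ε⁻¹ := by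
      field_simp
    rw [ge_iff_le, key]
    exact mul_le_mul hAz h (by positivity) (norm_nonneg _)
end

section
/- Let A ∈ BL(X), A ≠ 0, ε > 0, and suppose the pseudospectrum Λ_ε(A) is disjoint from {z : Re z > 0}. Then the condition pseudospectrum σ_{ε/(ε+2‖A‖)}(A) is also disjoint from {z : Re z > 0}. -/
theorem stmt18 {X : Type*} [NormedAddCommGroup X] [NormedSpace ℂ X] [CompleteSpace X]
    (A : X →L[ℂ] X) (hA : A ≠ 0) (ε : ℝ) (hε : 0 < ε)
    (hdisj : ∀ z : ℂ,
      (z ∈ spectrum ℂ A ∨ ‖Ring.inverse (A - z • (1 : X →L[ℂ] X))‖ ≥ ε⁻¹) →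
        ¬ 0 < z.re) :
    ∀ z : ℂ,
      (z ∈ spectrum ℂ A ∨
        ‖A - z • (1 : X →L[ℂ] X)‖ * ‖Ring.inverse (A - z • (1 : X →L[ℂ] X))‖ ≥
          (ε / (ε + 2 * ‖A‖))⁻¹) → ¬ 0 < z.re := by
  intro z hz hre
  have hnot : ¬(z ∈ spectrum ℂ A ∨
      ‖Ring.inverse (A - z • (1 : X →L[ℂ] X))‖ ≥ ε⁻¹) := fun hh => hdisj z hh hre
  push_neg at hnot
  obtain ⟨hsp, hR⟩ := hnot
  have hX : Nontrivial X := by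
    by_contra h
    rw [not_nontrivial_iff_subsingleton] at h
    exact hA (Subsingleton.elim A 0)
  have hU : IsUnit (A - z • (1 : X →L[ℂ] X)) := by
    have h1 := spectrum.notMem_iff.mp hsp
    rw [Algebra.algebraMap_eq_smul_one] at h1
    have := h1.neg
    rwa [neg_sub] at this
  set R := Ring.inverse (A - z • (1 : X →L[ℂ] X)) with hRdef
  have hmul : (A - z • (1 : X →L[ℂ] X)) * R = 1 := Ring.mul_inverse_cancel _ hU
  have hAnorm : 0 < ‖A‖ := norm_pos_iff.mpr hA
  have hz' : ‖A - z • (1 : X →L[ℂ] X)‖ * ‖R‖ ≥ (ε + 2 * ‖A‖) / ε := by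
    have := hz.resolve_left hsp
    rwa [inv_div] at this
  have hzn : ‖z • (1 : X →L[ℂ] X)‖ = ‖z‖ := by
    rw [norm_smul z (1 : X →L[ℂ] X), norm_one, mul_one]
  have hsub : ‖A - z • (1 : X →L[ℂ] X)‖ ≤ ‖A‖ + ‖z‖ := by
    calc ‖A - z • (1 : X →L[ℂ] X)‖ ≤ ‖A‖ + ‖z • (1 : X →L[ℂ] X)‖ := norm_sub_le _ _
    _ = ‖A‖ + ‖z‖ := by rw [hzn]
  rcases le_or_gt ‖z‖ (‖A‖ + ε) with hle | hlt
  · have h1 : ‖A - z • (1 : X →L[ℂ] X)‖ ≤ 2 * ‖A‖ + ε := by linarith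
    have h2 : ‖A - z • (1 : X →L[ℂ] X)‖ * ‖R‖ < (2 * ‖A‖ + ε) * ε⁻¹ :=
      mul_lt_mul' h1 hR (norm_nonneg _) (by positivity)
    have h3 : (2 * ‖A‖ + ε) * ε⁻¹ = (ε + 2 * ‖A‖) / ε := by
      field_simp; ring
    linarith [hz', h2.trans_eq h3]
  · -- resolvent bound: ‖R‖ * (‖z‖ - ‖A‖) ≤ 1
    have hid : z • R = A * R - 1 := by
      have h4 : A * R - z • R = 1 := by
        have : (A - z • (1 : X →L[ℂ] X)) * R = A * R - z • R := by
          rw [sub_mul, smul_mul_assoc, one_mul]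
        rw [← this]; exact hmul
      linear_combination (norm := module) -h4
    have hkey : ‖z‖ * ‖R‖ ≤ ‖A‖ * ‖R‖ + 1 := by
      calc ‖z‖ * ‖R‖ = ‖z • R‖ := (norm_smul z R).symm
      _ = ‖A * R - 1‖ := by rw [hid]
      _ ≤ ‖A * R‖ + ‖(1 : X →L[ℂ] X)‖ := norm_sub_le _ _
      _ ≤ ‖A‖ * ‖R‖ + 1 := by
          have := norm_mul_le A R
          rw [norm_one]; linarith
    have hRnn : (0:ℝ) ≤ ‖R‖ := norm_nonneg _
    have hprod : ‖A - z • (1 : X →L[ℂ] X)‖ * ‖R‖ ≤ (‖A‖ + ‖z‖) * ‖R‖ :=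
      mul_le_mul_of_nonneg_right hsub hRnn
    have hmain : ε + 2 * ‖A‖ ≤ ε * ((‖A‖ + ‖z‖) * ‖R‖) := by
      have h5 : (ε + 2 * ‖A‖) / ε ≤ (‖A‖ + ‖z‖) * ‖R‖ := le_trans hz' hprod
      rw [div_le_iff₀ hε] at h5
      linarith [h5]
    nlinarith [mul_le_mul_of_nonneg_left hkey hε.le, mul_pos hAnorm hε,
      mul_nonneg hRnn hε.le, mul_nonneg (mul_nonneg hRnn hε.le) (le_of_lt (by linarith : (0:ℝ) < ‖z‖ - ‖A‖))]
end
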